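/- If f_1,...,f_r : X → Y are fibrewise pointed maps over B, then D_B(f_1,...,f_r) ≤ ∏_{i=1}^r (cat_B^*(f_i) + 1) − 1. -/

import Mathlib

open Set

/-- Two continuous maps are fibrewise homotopic over `B`: there is a homotopy
whose every time-slice commutes with the projections to `B`. -/
def FibHomotopic {B X Y : Type*} [TopologicalSpace B] [TopologicalSpace X] [TopologicalSpace Y]
    (pX : X → B) (pY : Y → B) (f g : C(X, Y)) : Prop :=
  ∃ H : f.Homotopy g, ∀ (x : X) (t : unitInterval), pY (H (t, x)) = pX x

/-- Sequential parametrized homotopic distance of a family of fibrewise maps: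
the least `n` such that `X` admits an open cover by `n + 1` open sets on each of
which all the maps are pairwise fibrewise homotopic (`∞` if none exists). -/
noncomputable def fibDist {B X Y ι : Type*} [TopologicalSpace B] [TopologicalSpace X]
    [TopologicalSpace Y] (pX : X → B) (pY : Y → B) (f : ι → C(X, Y)) : ℕ∞ :=
  sInf {n : ℕ∞ | ∃ k : ℕ, (k : ℕ∞) = n ∧ ∃ U : Fin (k + 1) → Set X,
    (∀ i, IsOpen (U i)) ∧ (⋃ i, U i) = Set.univ ∧
    ∀ i s t, FibHomotopic (fun x : U i => pX (x : X)) pY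
      ((f s).restrict (U i)) ((f t).restrict (U i))}

/-! If `U^i_0, …, U^i_{k_i}` is an open cover of `X` on whose members `f_i` is fibrewise
homotopic to `g = s_Y ∘ p_X`, then the `∏ (k_i + 1)` intersections `⋂ᵢ U^i_{c_i}` cover `X`, and
on each of them every `f_i` is fibrewise homotopic to `g`, hence all the `f_i` are fibrewise
homotopic to one another. -/

theorem ENat.prod_add_one_eq_top {ι : Type*} [Fintype ι] {a : ι → ℕ∞} {i : ι} (hi : a i = ⊤) :
    ∏ j, (a j + 1) = ⊤ :=
  top_le_iff.mp <| calc
    ⊤ = a i + 1 := by rw [hi, top_add]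
    _ ≤ ∏ j, (a j + 1) := Finset.single_le_prod' (fun j _ => le_add_self) (Finset.mem_univ i)

namespace FibHomotopic

variable {B X Y Z : Type*} [TopologicalSpace B] [TopologicalSpace X] [TopologicalSpace Y]
  [TopologicalSpace Z] {pX : X → B} {pY : Y → B} {f g h : C(X, Y)}

theorem symm (hfg : FibHomotopic pX pY f g) : FibHomotopic pX pY g f := by
  obtain ⟨H, hH⟩ := hfg
  exact ⟨H.symm, fun x t => hH x _⟩

theorem trans (hfg : FibHomotopic pX pY f g) (hgh : FibHomotopic pX pY g h) :
    FibHomotopic pX pY f h := by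
  obtain ⟨H, hH⟩ := hfg
  obtain ⟨G, hG⟩ := hgh
  refine ⟨H.trans G, fun x t => ?_⟩
  rw [ContinuousMap.Homotopy.trans_apply]
  split_ifs
  · exact hH x _
  · exact hG x _

theorem comp_right (hfg : FibHomotopic pX pY f g) (e : C(Z, X)) :
    FibHomotopic (pX ∘ e) pY (f.comp e) (g.comp e) := by
  obtain ⟨H, hH⟩ := hfg
  exact ⟨H.compContinuousMap e, fun z t => hH (e z) t⟩

theorem restrict_mono {U V : Set X} (hVU : V ⊆ U)
    (hfg : FibHomotopic (fun x : U => pX x) pY (f.restrict U) (g.restrict U)) :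
    FibHomotopic (fun x : V => pX x) pY (f.restrict V) (g.restrict V) :=
  hfg.comp_right ⟨inclusion hVU, continuous_inclusion hVU⟩

end FibHomotopic

section FibDist

variable {B X Y : Type*} [TopologicalSpace B] [TopologicalSpace X] [TopologicalSpace Y]
  {pX : X → B} {pY : Y → B}

def HasFibCover {ι : Type*} (pX : X → B) (pY : Y → B) (f : ι → C(X, Y)) (k : ℕ) : Prop :=
  ∃ U : Fin (k + 1) → Set X, (∀ i, IsOpen (U i)) ∧ (⋃ i, U i) = Set.univ ∧
    ∀ i s t, FibHomotopic (fun x : U i => pX (x : X)) pY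
      ((f s).restrict (U i)) ((f t).restrict (U i))

theorem exists_hasFibCover_of_fibDist_ne_top {ι : Type*} {f : ι → C(X, Y)}
    (h : fibDist pX pY f ≠ ⊤) : ∃ k : ℕ, (k : ℕ∞) = fibDist pX pY f ∧ HasFibCover pX pY f k := by
  have hne : {n : ℕ∞ | ∃ k : ℕ, (k : ℕ∞) = n ∧ HasFibCover pX pY f k}.Nonempty := by
    by_contra hempty
    refine h (?_ : sInf {n : ℕ∞ | ∃ k : ℕ, (k : ℕ∞) = n ∧ HasFibCover pX pY f k} = ⊤)
    rw [not_nonempty_iff_eq_empty.mp hempty, sInf_empty]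
  exact csInf_mem hne

theorem fibDist_le_card_sub_one {ι κ : Type*} [Fintype κ] [Nonempty κ] {f : ι → C(X, Y)}
    (U : κ → Set X) (hU : ∀ c, IsOpen (U c)) (hcover : (⋃ c, U c) = univ)
    (hf : ∀ c s t, FibHomotopic (fun x : U c => pX x) pY ((f s).restrict (U c))
      ((f t).restrict (U c))) :
    fibDist pX pY f ≤ (Fintype.card κ - 1 : ℕ) := by
  have hcard : Fintype.card κ - 1 + 1 = Fintype.card κ := Nat.sub_add_cancel Fintype.card_pos
  let e : Fin (Fintype.card κ - 1 + 1) ≃ κ := (finCongr hcard).trans (Fintype.equivFin κ).symm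
  refine sInf_le ⟨_, rfl, U ∘ e, fun i => hU (e i), ?_, fun i => hf (e i)⟩
  rw [← hcover]
  exact e.surjective.iUnion_comp U

/-- `D_B(f, g)`; the paper's `cat_B^*(f)` is `fibDistPair pX pY f (s_Y ∘ p_X)`. -/
noncomputable def fibDistPair (pX : X → B) (pY : Y → B) (f g : C(X, Y)) : ℕ∞ :=
  fibDist pX pY fun b : Fin 2 => if b.val = 0 then f else g

theorem fibDist_le_prod_fibDistPair_sub_one {ι : Type*} [Fintype ι] (f : ι → C(X, Y))
    (g : C(X, Y)) :
    fibDist pX pY f ≤ (∏ i, (fibDistPair pX pY (f i) g + 1)) - 1 := by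
  classical
  by_cases htop : ∃ i, fibDistPair pX pY (f i) g = ⊤
  · obtain ⟨i, hi⟩ := htop
    rw [ENat.prod_add_one_eq_top (a := fun j => fibDistPair pX pY (f j) g) hi, ENat.top_sub_one]
    exact le_top
  push Not at htop
  choose k hk U hU hcover hUf using fun i => exists_hasFibCover_of_fibDist_ne_top (htop i)
  have hfg : ∀ i m, FibHomotopic (fun x : U i m => pX x) pY ((f i).restrict (U i m))
      (g.restrict (U i m)) := fun i m => by simpa using hUf i m 0 1
  let V : (∀ i, Fin (k i + 1)) → Set X := fun c => ⋂ i, U i (c i)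
  have hVU : ∀ c i, V c ⊆ U i (c i) := fun c i => iInter_subset _ i
  have hVcover : (⋃ c, V c) = univ := by
    refine eq_univ_of_forall fun x => mem_iUnion.mpr ?_
    choose c hc using fun i => mem_iUnion.mp ((hcover i).symm ▸ mem_univ x : x ∈ ⋃ m, U i m)
    exact ⟨c, mem_iInter.mpr hc⟩
  refine (fibDist_le_card_sub_one V (fun c => isOpen_iInter_of_finite fun i => hU i _) hVcover
    fun c s t => ((hfg s _).restrict_mono (hVU c s)).trans
      ((hfg t _).restrict_mono (hVU c t)).symm).trans_eq ?_
  simp only [Fintype.card_pi, Fintype.card_fin, fibDistPair, ← hk]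
  norm_cast

end FibDist

theorem stmt7_general {B X Y : Type*} [TopologicalSpace B] [TopologicalSpace X] [TopologicalSpace Y]
    (pX : C(X, B)) (pY : C(Y, B)) (sY : C(B, Y))
    (r : ℕ) (f : Fin r → C(X, Y)) :
    fibDist (⇑pX) (⇑pY) f ≤
      (∏ i : Fin r,
        (fibDist (⇑pX) (⇑pY) (fun b : Fin 2 => if b.val = 0 then f i else sY.comp pX) + 1)) - 1 :=
  fibDist_le_prod_fibDistPair_sub_one f (sY.comp pX)

/-- For fibrewise pointed maps, `D_B(f_1,…,f_r) ≤ ∏ (cat_B^*(f_i) + 1) - 1`, where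
`cat_B^*(f_i) = D_B(f_i, s_Y ∘ p_X)`. -/
theorem stmt7 {B X Y : Type*} [TopologicalSpace B] [TopologicalSpace X] [TopologicalSpace Y]
    (pX : C(X, B)) (pY : C(Y, B)) (sX : C(B, X)) (sY : C(B, Y))
    (hsX : ∀ b, pX (sX b) = b) (hsY : ∀ b, pY (sY b) = b)
    (r : ℕ) (f : Fin r → C(X, Y))
    (hf : ∀ i x, pY (f i x) = pX x) (hfp : ∀ i b, f i (sX b) = sY b) :
    fibDist (⇑pX) (⇑pY) f ≤
      (∏ i : Fin r,
        (fibDist (⇑pX) (⇑pY) (fun b : Fin 2 => if b.val = 0 then f i else sY.comp pX) + 1)) - 1 :=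
  stmt7_general pX pY sY r f
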